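/- (Lemma 'equiv', type A_{2n−1}^{(2)}.) Suppose in addition that λ is C_n-dominant, i.e., λ_1 ≥ λ_2 ≥ ⋯ ≥ λ_n ≥ 0. Then the following are equivalent: (1) P_i^{(a)}(ν) ≥ 0 for every 1 ≤ a ≤ n and every integer i ≥ 1; (2) P_i^{(a)}(ν) ≥ 0 for every 1 ≤ a ≤ n and every integer i ≥ 1 such that m_i(ν^{(a)}) > 0. -/
import Mathlib


/-!
STATEMENT 17: Lemma 'equiv', type A_{2n-1}^{(2)}.
-/

namespace OSS

/-- `Q i τ = Σ_{t ∈ τ} min(t, i)`. -/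
def Q (i : ℚ) (τ : Multiset ℚ) : ℚ := (τ.map (fun t => min t i)).sum

/-- Vacancy numbers of type `A_{2n-1}^{(2)}` (with `ν 0 = ∅` assumed). -/
def P (n L : ℕ) (ν : ℕ → Multiset ℚ) (a : ℕ) (i : ℚ) : ℚ :=
  if a = n then Q i (ν (n - 1)) - 2 * Q i (ν n)
  else if a = n - 1 then Q i (ν (n - 2)) - 2 * Q i (ν (n - 1)) + 2 * Q i (ν n)
  else
    Q i (ν (a - 1)) - 2 * Q i (ν a) + Q i (ν (a + 1))
      + (L : ℚ) * min i 1 * (if a = 1 then 1 else 0)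

lemma Q_cons (i x : ℚ) (s : Multiset ℚ) : Q i (x ::ₘ s) = min x i + Q i s := by
  simp [Q]

lemma min_concave (t i : ℚ) : min t (i-1) + min t (i+1) ≤ 2 * min t i := by
  rcases le_total t i with h | h
  · have h1 : min t (i+1) = t := min_eq_left (by linarith)
    have h2 : min t i = t := min_eq_left h
    have := min_le_left t (i-1); linarith
  · have h1 : min t i = i := min_eq_right h
    have h2 : min t (i-1) = i-1 := min_eq_right (by linarith)
    have := min_le_right t (i+1); linarith

lemma min_flat (t i : ℚ) (h : t ≤ i - 1 ∨ i + 1 ≤ t) :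
    min t (i-1) + min t (i+1) = 2 * min t i := by
  rcases h with h | h
  · rw [min_eq_left h, min_eq_left (by linarith), min_eq_left (by linarith)]; ring
  · rw [min_eq_right (by linarith), min_eq_right (by linarith), min_eq_right (by linarith)]; ring

lemma Q_concave (τ : Multiset ℚ) (i : ℚ) : Q (i-1) τ + Q (i+1) τ ≤ 2 * Q i τ := by
  induction τ using Multiset.induction with
  | empty => simp [Q]
  | cons x s ih =>
    rw [Q_cons, Q_cons, Q_cons]
    have := min_concave x i; linarith

lemma Q_flat (τ : Multiset ℚ) (i : ℚ) (h : ∀ t ∈ τ, t ≤ i - 1 ∨ i + 1 ≤ t) :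
    Q (i-1) τ + Q (i+1) τ = 2 * Q i τ := by
  induction τ using Multiset.induction with
  | empty => simp [Q]
  | cons x s ih =>
    rw [Q_cons, Q_cons, Q_cons]
    have h1 := min_flat x i (h x (Multiset.mem_cons_self x s))
    have h2 := ih (fun t ht => h t (Multiset.mem_cons_of_mem ht))
    linarith

lemma Q_eq_sum (τ : Multiset ℚ) (i : ℚ) (h : ∀ t ∈ τ, t ≤ i) : Q i τ = τ.sum := by
  induction τ using Multiset.induction with
  | empty => simp [Q]
  | cons x s ih =>
    rw [Q_cons, Multiset.sum_cons, min_eq_left (h x (Multiset.mem_cons_self x s)),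
      ih (fun t ht => h t (Multiset.mem_cons_of_mem ht))]

lemma Q_zero (τ : Multiset ℚ) (h : ∀ t ∈ τ, 0 ≤ t) : Q 0 τ = 0 := by
  induction τ using Multiset.induction with
  | empty => simp [Q]
  | cons x s ih =>
    rw [Q_cons, min_eq_right (h x (Multiset.mem_cons_self x s)),
      ih (fun t ht => h t (Multiset.mem_cons_of_mem ht))]
    ring

lemma min_concave' (i : ℚ) : min (i-1) 1 + min (i+1) 1 ≤ 2 * min i 1 := by
  simpa [min_comm] using min_concave 1 i

lemma P_step (n L : ℕ) (ν : ℕ → Multiset ℚ) (a : ℕ) (i : ℚ)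
    (hflat : ∀ t ∈ ν a, t ≤ i - 1 ∨ i + 1 ≤ t) :
    P n L ν a (i-1) + P n L ν a (i+1) ≤ 2 * P n L ν a i := by
  have hL : (0:ℚ) ≤ (L:ℚ) := Nat.cast_nonneg L
  unfold P
  split_ifs with h1 h2 h3
  · rw [h1] at hflat
    have c1 := Q_concave (ν (n-1)) i
    have f1 := Q_flat (ν n) i hflat
    linarith
  · rw [h2] at hflat
    have c1 := Q_concave (ν (n-2)) i
    have c2 := Q_concave (ν n) i
    have f1 := Q_flat (ν (n-1)) i hflat
    linarith
  · have c1 := Q_concave (ν (a-1)) i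
    have c2 := Q_concave (ν (a+1)) i
    have f1 := Q_flat (ν a) i hflat
    have m1 := min_concave' i
    have m2 := mul_le_mul_of_nonneg_left m1 hL
    nlinarith
  · have c1 := Q_concave (ν (a-1)) i
    have c2 := Q_concave (ν (a+1)) i
    have f1 := Q_flat (ν a) i hflat
    simp only [mul_zero]
    linarith

lemma P_const (n L : ℕ) (ν : ℕ → Multiset ℚ) (a : ℕ) (i j : ℚ)
    (hn : 3 ≤ n) (ha1 : 1 ≤ a) (han : a ≤ n) (hi : 1 ≤ i) (hj : 1 ≤ j)
    (H : ∀ b ≤ n, Q i (ν b) = Q j (ν b)) :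
    P n L ν a i = P n L ν a j := by
  unfold P
  split_ifs with h1 h2 h3
  · rw [H (n-1) (by omega), H n le_rfl]
  · rw [H (n-2) (by omega), H (n-1) (by omega), H n le_rfl]
  · rw [H (a-1) (by omega), H a (by omega), H (a+1) (by omega),
      min_eq_right hi, min_eq_right hj]
  · rw [H (a-1) (by omega), H a (by omega), H (a+1) (by omega)]
    ring

lemma P_zero (n L : ℕ) (ν : ℕ → Multiset ℚ) (a : ℕ)
    (hn : 3 ≤ n) (ha1 : 1 ≤ a) (han : a ≤ n)
    (H : ∀ b ≤ n, Q 0 (ν b) = 0) :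
    P n L ν a 0 = 0 := by
  unfold P
  split_ifs with h1 h2 h3
  · rw [H (n-1) (by omega), H n le_rfl]; ring
  · rw [H (n-2) (by omega), H (n-1) (by omega), H n le_rfl]; ring
  · rw [H (a-1) (by omega), H a (by omega), H (a+1) (by omega)]
    have hm : min (0:ℚ) 1 = 0 := min_eq_left (by norm_num)
    rw [hm]; ring
  · rw [H (a-1) (by omega), H a (by omega), H (a+1) (by omega)]
    ring

theorem vacancy_nonneg_iff_A2odd (n L : ℕ) (hn : 3 ≤ n) (lam : ℕ → ℤ) (ν : ℕ → Multiset ℚ)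
    (hν0 : ν 0 = 0)
    (hparts : ∀ a, 1 ≤ a → a ≤ n → ∀ t ∈ ν a, ∃ k : ℤ, 0 < k ∧ t = (k : ℚ))
    (hsize : ∀ a, 1 ≤ a → a ≤ n - 1 →
      (ν a).sum = (L : ℚ) - ∑ b ∈ Finset.Icc 1 a, (lam b : ℚ))
    (hsizen : (ν n).sum = ((L : ℚ) - ∑ b ∈ Finset.Icc 1 n, (lam b : ℚ)) / 2)
    (hdom : ∀ a, 1 ≤ a → a ≤ n - 1 → lam (a + 1) ≤ lam a)
    (hdom' : 0 ≤ lam n)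
    :
    (∀ a, 1 ≤ a → a ≤ n → ∀ i : ℤ, 1 ≤ i → 0 ≤ P n L ν a (i : ℚ)) ↔
    (∀ a, 1 ≤ a → a ≤ n → ∀ i : ℤ, 1 ≤ i →
      0 < (ν a).count (i : ℚ) → 0 ≤ P n L ν a (i : ℚ)) := by
  constructor
  · intro H a h1 h2 i hi _; exact H a h1 h2 i hi
  intro h a ha1 han i hi
  have hnn : ∀ b ≤ n, ∀ t ∈ ν b, 0 ≤ t := by
    intro b hb t ht
    rcases Nat.eq_zero_or_pos b with hb0 | hb1
    · rw [hb0, hν0] at ht; simp at ht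
    · obtain ⟨k, hk, rfl⟩ := hparts b hb1 hb t ht
      exact_mod_cast hk.le
  set s : Multiset ℚ := ∑ b ∈ Finset.range (n+1), ν b with hs
  have hmems : ∀ b ≤ n, ∀ t ∈ ν b, t ∈ s := by
    intro b hb t ht
    rw [hs]
    exact Multiset.mem_sum.mpr ⟨b, Finset.mem_range.mpr (by omega), ht⟩
  have hsnn : ∀ t ∈ s, 0 ≤ t := by
    intro t ht
    rw [hs] at ht
    obtain ⟨b, hb, htb⟩ := Multiset.mem_sum.mp ht
    have hb' := Finset.mem_range.mp hb
    exact hnn b (by omega) t htb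
  have hbound : ∀ b ≤ n, ∀ t ∈ ν b, t ≤ s.sum := by
    intro b hb t ht
    exact Multiset.single_le_sum hsnn t (hmems b hb t ht)
  set B : ℕ := max 1 ⌈s.sum⌉₊ with hB
  have hBbig : ∀ (j : ℕ), B ≤ j → ∀ b ≤ n, ∀ t ∈ ν b, t ≤ (j : ℚ) := by
    intro j hj b hb t ht
    have h1 := hbound b hb t ht
    have h2 : s.sum ≤ (⌈s.sum⌉₊ : ℚ) := Nat.le_ceil _
    have h3 : (⌈s.sum⌉₊ : ℚ) ≤ (j : ℚ) :=
      Nat.cast_le.mpr (le_trans (le_max_right 1 _) hj)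
    linarith
  set f : ℕ → ℚ := fun j => P n L ν a (j : ℚ) with hf
  have hcnt : ∀ j : ℕ, 1 ≤ j → f j < 0 → ((j : ℚ)) ∉ ν a := by
    intro j hj hfj hmem
    have hcpos : 0 < (ν a).count (((j:ℤ)) : ℚ) := by
      rw [Multiset.count_pos]; exact_mod_cast hmem
    have h2 := h a ha1 han (j : ℤ) (by exact_mod_cast hj) hcpos
    have hfj' : P n L ν a ((j:ℕ) : ℚ) < 0 := hfj
    simp only [Int.cast_natCast] at h2
    linarith
  have stepNat : ∀ j : ℕ, f (j+1) < 0 → f j + f (j+1+1) ≤ 2 * f (j+1) := by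
    intro j hneg
    have hnotmem := hcnt (j+1) (by omega) hneg
    have hflat : ∀ t ∈ ν a, t ≤ ((j+1 : ℕ) : ℚ) - 1 ∨ ((j+1 : ℕ) : ℚ) + 1 ≤ t := by
      intro t ht
      obtain ⟨k, hk, rfl⟩ := hparts a ha1 han t ht
      have hne : (k : ℚ) ≠ ((j+1 : ℕ) : ℚ) := by
        intro he; rw [he] at ht; exact hnotmem ht
      have hkz : k ≠ (j : ℤ) + 1 := by
        intro he; apply hne; rw [he]; push_cast; ring
      rcases lt_or_gt_of_ne hkz with hlt | hgt
      · left
        have hq : (k:ℚ) ≤ (j:ℚ) := by exact_mod_cast (show k ≤ (j:ℤ) by omega)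
        push_cast; linarith
      · right
        have hq : ((j:ℚ)) + 2 ≤ (k:ℚ) := by exact_mod_cast (show (j:ℤ) + 2 ≤ k by omega)
        push_cast; linarith
    have hstep := P_step n L ν a ((j+1 : ℕ) : ℚ) hflat
    have e1 : ((j : ℕ) : ℚ) = ((j+1 : ℕ) : ℚ) - 1 := by push_cast; ring
    have e2 : ((j+1+1 : ℕ) : ℚ) = ((j+1 : ℕ) : ℚ) + 1 := by push_cast; ring
    show P n L ν a ((j:ℕ):ℚ) + P n L ν a ((j+1+1 : ℕ):ℚ) ≤ 2 * P n L ν a ((j+1 : ℕ):ℚ)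
    rw [e1, e2]
    exact hstep
  have hf0 : f 0 = 0 := by
    have h0 := P_zero n L ν a hn ha1 han (fun b hb => Q_zero (ν b) (hnn b hb))
    show P n L ν a ((0:ℕ):ℚ) = 0
    rw [Nat.cast_zero]
    exact h0
  have hconst : ∀ j k : ℕ, B ≤ j → B ≤ k → f j = f k := by
    intro j k hj hk
    show P n L ν a ((j:ℕ):ℚ) = P n L ν a ((k:ℕ):ℚ)
    apply P_const n L ν a _ _ hn ha1 han
    · exact_mod_cast le_trans (le_max_left 1 _) hj
    · exact_mod_cast le_trans (le_max_left 1 _) hk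
    · intro b hb
      rw [Q_eq_sum (ν b) _ (hBbig j hj b hb), Q_eq_sum (ν b) _ (hBbig k hk b hb)]
  have key : ∀ j : ℕ, 0 ≤ f j := by
    by_contra hnegall
    push_neg at hnegall
    obtain ⟨j0, hj0⟩ := hnegall
    have hex : ∃ j, f j < 0 := ⟨j0, hj0⟩
    classical
    have hfind : f (Nat.find hex) < 0 := Nat.find_spec hex
    have hpos : 1 ≤ Nat.find hex := by
      rcases Nat.eq_zero_or_pos (Nat.find hex) with h0 | h0
      · rw [h0, hf0] at hfind; exact absurd hfind (by norm_num)
      · exact h0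
    obtain ⟨m, hm⟩ : ∃ m, Nat.find hex = m + 1 := ⟨Nat.find hex - 1, by omega⟩
    rw [hm] at hfind
    have hfm : 0 ≤ f m := le_of_not_gt (Nat.find_min hex (by omega))
    set d : ℚ := f (m+1) - f m with hd
    have hdneg : d < 0 := by rw [hd]; linarith
    have inv : ∀ k : ℕ, f (m+1+k) < 0 ∧ f (m+1+k+1) - f (m+1+k) ≤ d := by
      intro k
      induction k with
      | zero =>
        refine ⟨hfind, ?_⟩
        have hs := stepNat m hfind
        show f (m+1+1) - f (m+1) ≤ d
        linarith [hd]
      | succ k ih =>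
        obtain ⟨ihneg, ihgap⟩ := ih
        have hnext : f (m+1+k+1) < 0 := by linarith
        have hs := stepNat (m+1+k) hnext
        show f (m+1+k+1) < 0 ∧ f (m+1+k+1+1) - f (m+1+k+1) ≤ d
        exact ⟨hnext, by linarith⟩
    have h1 := (inv B).2
    have h2 : f (m+1+B) = f (m+1+B+1) := hconst _ _ (by omega) (by omega)
    linarith
  have he : ((i.toNat : ℕ) : ℚ) = (i : ℚ) := by
    have h2 : ((i.toNat : ℤ)) = i := Int.toNat_of_nonneg (by omega)
    exact_mod_cast h2
  rw [← he]
  exact key i.toNat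

end OSS
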